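/- (Gát's kernel lemma.) Let t, A ∈ ℕ with t < A and let z ∈ I_t ∖ I_{t+1} (so z₀ = ⋯ = z_{t−1} = 0 and z_t = 1). Then K_{2^A}^w(z) = 0 if z + e_t ∉ I_A, and K_{2^A}^w(z) = 2^{t−1} if z + e_t ∈ I_A. Moreover, if z ∈ I_A then K_{2^A}^w(z) = (2^A − 1)/2. -/

import Mathlib

open MeasureTheory ENNReal

noncomputable section

/-- The Walsh group: countable product of copies of ℤ₂. -/
abbrev G : Type := ℕ → ZMod 2

instance : TopologicalSpace (ZMod 2) := ⊥
instance : DiscreteTopology (ZMod 2) := ⟨rfl⟩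
instance : IsTopologicalAddGroup (ZMod 2) :=
  { continuous_add := continuous_of_discreteTopology
    continuous_neg := continuous_of_discreteTopology }
instance : MeasurableSpace G := borel G
instance : BorelSpace G := ⟨rfl⟩

/-- The normalized Haar (= product) measure on `G`. -/
def μ : Measure G := Measure.addHaarMeasure (⊤ : TopologicalSpace.PositiveCompacts G)

/-- The `k`-th Rademacher function. -/
def rad (k : ℕ) (x : G) : ℝ := (-1 : ℝ) ^ (x k).val

/-- `|n| = ⌊log₂ n⌋`. -/
def lg (n : ℕ) : ℕ := Nat.log 2 n

/-- The Walsh–Paley functions. -/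
def walsh (n : ℕ) (x : G) : ℝ :=
  ∏ k ∈ Finset.range (n + 1), rad k x ^ (n.testBit k).toNat

/-- The Walsh–Kaczmarz functions. -/
def kacz (n : ℕ) (x : G) : ℝ :=
  if n = 0 then 1
  else rad (lg n) x *
    ∏ k ∈ Finset.range (lg n), rad (lg n - 1 - k) x ^ (n.testBit k).toNat

/-- Walsh–Paley Dirichlet kernel. -/
def DW (n : ℕ) (x : G) : ℝ := ∑ k ∈ Finset.range n, walsh k x

/-- Walsh–Kaczmarz Dirichlet kernel. -/
def DK (n : ℕ) (x : G) : ℝ := ∑ k ∈ Finset.range n, kacz k x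

/-- Walsh–Paley Fejér kernel (with `KW 0 = 0`). -/
def KW (n : ℕ) (x : G) : ℝ := (∑ k ∈ Finset.range n, DW k x) / n

/-- Walsh–Kaczmarz Fejér kernel. -/
def KK (n : ℕ) (x : G) : ℝ := (∑ k ∈ Finset.range n, DK k x) / n

/-- Reversal of the first `A` coordinates. -/
def tau (A : ℕ) (x : G) : G := fun k => if k < A then x (A - 1 - k) else x k

/-- Walsh–Fourier coefficients. -/
def coefW (f : G → ℝ) (i : ℕ) : ℝ := ∫ x, f x * walsh i x ∂μ

/-- Walsh–Kaczmarz–Fourier coefficients. -/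
def coefK (f : G → ℝ) (i : ℕ) : ℝ := ∫ x, f x * kacz i x ∂μ

/-- Partial sums of the Walsh–Fourier series. -/
def SW (f : G → ℝ) (M : ℕ) (x : G) : ℝ := ∑ i ∈ Finset.range M, coefW f i * walsh i x

/-- Partial sums of the Walsh–Kaczmarz–Fourier series. -/
def SK (f : G → ℝ) (M : ℕ) (x : G) : ℝ := ∑ i ∈ Finset.range M, coefK f i * kacz i x

/-- Fejér means of the Walsh–Kaczmarz–Fourier series. -/
def sigmaK (f : G → ℝ) (n : ℕ) (x : G) : ℝ := (∑ j ∈ Finset.range n, SK f j x) / n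

/-- The dyadic martingale maximal function. -/
def fstar (f : G → ℝ) (x : G) : ℝ≥0∞ := ⨆ n : ℕ, ENNReal.ofReal |SW f (2 ^ n) x|

/-- Dyadic interval of rank `n` around `x`. -/
def cyl (n : ℕ) (x : G) : Set G := {y : G | ∀ k < n, y k = x k}

/-- Dyadic interval `I_n` around `0`. -/
def In (n : ℕ) : Set G := cyl n 0

/-- `e t`: the element of `G` whose `t`-th coordinate is `1` and the rest are `0`. -/
def e (t : ℕ) : G := fun k => if k = t then 1 else 0

/-- `q_m = 2^{2m} + 2^{2m-2} + ⋯ + 2² + 2⁰`. -/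
def qA (m : ℕ) : ℕ := ∑ i ∈ Finset.range (m + 1), 4 ^ i

/-- `f_m = D_{2^{2m+1}}^w − D_{2^{2m}}^w`. -/
def fm (m : ℕ) (x : G) : ℝ := DW (2 ^ (2 * m + 1)) x - DW (2 ^ (2 * m)) x

/-- The weak `L^p` quasinorm `‖f‖_{L_{p,∞}} = sup_{λ>0} λ · μ{|f|>λ}^{1/p}`. -/
def wnorm (f : G → ℝ) (p : ℝ) : ℝ≥0∞ :=
  ⨆ (l : ℝ) (_ : 0 < l), ENNReal.ofReal l * μ {x : G | l < |f x|} ^ (1 / p)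

/-- The set `J_N^{m,l}` (with `m : ℤ`, `-1 ≤ m ≤ l`). -/
def Jset (N l : ℕ) (m : ℤ) : Set G :=
  {x : G | (∀ j : ℕ, m < (j : ℤ) → j < l → x j = 0) ∧ x l = 1 ∧
    (∀ j : ℕ, l < j → j < N → x j = 0) ∧ (0 ≤ m → x m.toNat = 1)}

lemma rad_one {x : G} {k : ℕ} (h : x k = 0) : rad k x = 1 := by simp [rad, h]

lemma rad_neg {x : G} {k : ℕ} (h : x k = 1) : rad k x = -1 := by
  have : (x k).val = 1 := by rw [h]; rfl
  simp [rad, this]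

lemma prod_ext {n N N' : ℕ} (h : n < 2 ^ N) (hNN : N ≤ N') (x : G) :
    (∏ k ∈ Finset.range N', rad k x ^ (n.testBit k).toNat)
      = ∏ k ∈ Finset.range N, rad k x ^ (n.testBit k).toNat := by
  symm
  apply Finset.prod_subset (Finset.range_subset_range.2 hNN)
  intro k _ hk
  simp only [Finset.mem_range, not_lt] at hk
  have : n.testBit k = false :=
    Nat.testBit_lt_two_pow (lt_of_lt_of_le h (Nat.pow_le_pow_right (by norm_num) hk))
  simp [this]

lemma walsh_eq_prod {n M : ℕ} (h : n < 2 ^ M) (x : G) :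
    walsh n x = ∏ k ∈ Finset.range M, rad k x ^ (n.testBit k).toNat := by
  have hn1 : n < 2 ^ (n + 1) :=
    lt_of_lt_of_le (Nat.lt_two_pow_self (n := n)) (Nat.pow_le_pow_right (by norm_num) (Nat.le_succ n))
  calc walsh n x = ∏ k ∈ Finset.range (max (n+1) M), rad k x ^ (n.testBit k).toNat :=
        (prod_ext hn1 (le_max_left _ _) x).symm
    _ = _ := prod_ext h (le_max_right _ _) x

lemma walsh_two_pow_add {n k : ℕ} (h : k < 2 ^ n) (x : G) :
    walsh (2 ^ n + k) x = rad n x * walsh k x := by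
  have h1 : 2 ^ n + k < 2 ^ (n + 1) := by
    rw [pow_succ]; omega
  rw [walsh_eq_prod h1 x, walsh_eq_prod h x, Finset.prod_range_succ]
  have ht : (2 ^ n + k).testBit n = true := by
    rw [Nat.testBit_two_pow_add_eq, Nat.testBit_lt_two_pow h]; rfl
  rw [ht]
  have : ∀ j ∈ Finset.range n, rad j x ^ ((2 ^ n + k).testBit j).toNat
      = rad j x ^ (k.testBit j).toNat := by
    intro j hj
    rw [Nat.testBit_two_pow_add_gt (Finset.mem_range.1 hj)]
  rw [Finset.prod_congr rfl this]
  simp [mul_comm]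

lemma DW_two_pow_add {n k : ℕ} (h : k ≤ 2 ^ n) (x : G) :
    DW (2 ^ n + k) x = DW (2 ^ n) x + rad n x * DW k x := by
  rw [DW, Finset.sum_range_add, DW, DW, Finset.mul_sum]
  congr 1
  apply Finset.sum_congr rfl
  intro i hi
  exact walsh_two_pow_add (lt_of_lt_of_le (Finset.mem_range.1 hi) h) x

lemma DW_two_pow (n : ℕ) (x : G) :
    DW (2 ^ n) x = ∏ j ∈ Finset.range n, (1 + rad j x) := by
  induction n with
  | zero => simp [DW, walsh]
  | succ n ih =>
    have h2 : (2 : ℕ) ^ (n + 1) = 2 ^ n + 2 ^ n := by ring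
    rw [h2, DW_two_pow_add le_rfl x, ih, Finset.prod_range_succ]
    ring

/-- Auxiliary: `Sf n x = ∑_{k < 2^n} D_k^w(x)`. -/
def Sf (n : ℕ) (x : G) : ℝ := ∑ k ∈ Finset.range (2 ^ n), DW k x

lemma Sf_succ (n : ℕ) (x : G) :
    Sf (n + 1) x = (1 + rad n x) * Sf n x + 2 ^ n * DW (2 ^ n) x := by
  have h : (2 : ℕ) ^ (n + 1) = 2 ^ n + 2 ^ n := by ring
  rw [Sf, h, Finset.sum_range_add]
  have : ∀ i ∈ Finset.range (2 ^ n), DW (2 ^ n + i) x = DW (2 ^ n) x + rad n x * DW i x := by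
    intro i hi
    exact DW_two_pow_add (le_of_lt (Finset.mem_range.1 hi)) x
  rw [Finset.sum_congr rfl this, Finset.sum_add_distrib, ← Finset.mul_sum,
    Finset.sum_const, Finset.card_range]
  show Sf n x + ((2:ℕ) ^ n • DW (2 ^ n) x + rad n x * Sf n x) = _
  push_cast [nsmul_eq_mul]
  ring

lemma DW_two_pow_eq {z : G} {n : ℕ} (h : ∀ j, j < n → z j = 0) :
    DW (2 ^ n) z = 2 ^ n := by
  rw [DW_two_pow]
  have : ∀ j ∈ Finset.range n, (1 + rad j z) = 2 := by
    intro j hj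
    rw [rad_one (h j (Finset.mem_range.1 hj))]; norm_num
  rw [Finset.prod_congr rfl this, Finset.prod_const, Finset.card_range]

lemma DW_two_pow_zero_eval {z : G} {t n : ℕ} (ht : z t = 1) (h : t < n) :
    DW (2 ^ n) z = 0 := by
  rw [DW_two_pow]
  apply Finset.prod_eq_zero (Finset.mem_range.2 h)
  rw [rad_neg ht]; ring

lemma Sf_In {z : G} {A : ℕ} (hz : ∀ k, k < A → z k = 0) :
    ∀ n, n ≤ A → Sf n z * 2 = 4 ^ n - 2 ^ n := by
  intro n
  induction n with
  | zero => intro _; simp [Sf, DW]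
  | succ n ih =>
    intro hn
    have hnA : n < A := hn
    have h2 := ih (le_of_lt hnA)
    have h4 : (4:ℝ) ^ n = 2 ^ n * 2 ^ n := by rw [← mul_pow]; norm_num
    rw [Sf_succ, rad_one (hz n hnA),
      DW_two_pow_eq (fun j hj => hz j (lt_trans hj hnA)), pow_succ, pow_succ]
    nlinarith [h2, h4]

lemma Sf_mid {z : G} {t : ℕ} (hz : ∀ k, k < t → z k = 0) (ht : z t = 1) :
    ∀ n, t + 1 ≤ n → Sf n z = 4 ^ t * ∏ j ∈ Finset.Ico (t+1) n, (1 + rad j z) := by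
  intro n hn
  induction n, hn using Nat.le_induction with
  | base =>
    rw [Sf_succ, rad_neg ht, DW_two_pow_eq hz, Finset.Ico_self, Finset.prod_empty]
    have h4 : (4:ℝ) ^ t = 2 ^ t * 2 ^ t := by rw [← mul_pow]; norm_num
    rw [h4]; ring
  | succ n hn ih =>
    rw [Sf_succ, DW_two_pow_zero_eval ht (lt_of_lt_of_le (Nat.lt_succ_self t) hn), ih,
      Finset.prod_Ico_succ_top hn]
    ring

lemma zmod2_ne_zero {a : ZMod 2} (h : a ≠ 0) : a = 1 := by
  revert h; revert a; decide

/-- Gát's kernel lemma for the Walsh–Paley Fejér kernel `K_{2^A}^w`. -/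
theorem gat_kernel_lemma (t A : ℕ) (htA : t < A) :
    (∀ z : G, (∀ k, k < t → z k = 0) → z t = 1 →
      (z + e t ∉ In A → KW (2 ^ A) z = 0) ∧
      (z + e t ∈ In A → KW (2 ^ A) z = (2 : ℝ) ^ ((t : ℤ) - 1))) ∧
    (∀ z ∈ In A, KW (2 ^ A) z = ((2 : ℝ) ^ A - 1) / 2) := by
  have hKW : ∀ z : G, KW (2 ^ A) z = Sf A z / 2 ^ A := by
    intro z
    unfold KW Sf
    push_cast
    ring
  have h2A : (2:ℝ) ^ A ≠ 0 := by positivity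
  constructor
  · intro z hz0 hzt
    have hS := Sf_mid hz0 hzt A htA
    constructor
    · intro hne
      have hex : ∃ k, k < A ∧ (z + e t) k ≠ 0 := by
        by_contra hc
        push_neg at hc
        exact hne (fun k hk => hc k hk)
      obtain ⟨k, hkA, hk⟩ := hex
      have hket : e t k = if k = t then 1 else 0 := rfl
      have htk : t < k := by
        by_contra hle
        push_neg at hle
        rcases lt_or_eq_of_le hle with hlt | heq
        · apply hk
          have : e t k = 0 := by rw [hket, if_neg (Nat.ne_of_lt hlt)]
          rw [Pi.add_apply, hz0 k hlt, this]; rfl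
        · apply hk
          rw [Pi.add_apply, heq, hzt]
          have : e t t = 1 := by rw [show e t t = if t = t then (1:ZMod 2) else 0 from rfl, if_pos rfl]
          rw [this]; decide
      have hzk : z k = 1 := by
        apply zmod2_ne_zero
        intro h0
        apply hk
        rw [Pi.add_apply, h0, hket, if_neg (Nat.ne_of_gt htk)]; rfl
      rw [hKW, hS,
        Finset.prod_eq_zero (Finset.mem_Ico.2 ⟨htk, hkA⟩) (by rw [rad_neg hzk]; ring)]
      simp
    · intro hmem
      have hz' : ∀ j ∈ Finset.Ico (t+1) A, (1 + rad j z) = 2 := by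
        intro j hj
        obtain ⟨hj1, hj2⟩ := Finset.mem_Ico.1 hj
        have hzej : (z + e t) j = 0 := hmem j hj2
        have hej : e t j = 0 := by
          rw [show e t j = if j = t then (1:ZMod 2) else 0 from rfl, if_neg (by omega)]
        have hzj : z j = 0 := by
          have := hzej
          rw [Pi.add_apply, hej, add_zero] at this
          exact this
        rw [rad_one hzj]; norm_num
      rw [hKW, hS, Finset.prod_congr rfl hz', Finset.prod_const, Nat.card_Ico]
      have hz2 : (2:ℝ) ^ ((t:ℤ) - 1) = 2 ^ t / 2 := by
        rw [zpow_sub₀ (two_ne_zero), zpow_one, zpow_natCast]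
      rw [hz2, div_eq_div_iff h2A (two_ne_zero)]
      have hnat : (4:ℕ) ^ t * 2 ^ (A - (t+1)) * 2 = 2 ^ t * 2 ^ A := by
        rw [show (4:ℕ) = 2 ^ 2 from rfl, ← pow_mul, ← pow_add, ← pow_succ, ← pow_add]
        congr 1
        omega
      exact_mod_cast hnat
  · intro z hz
    have hz' : ∀ k, k < A → z k = 0 := by
      intro k hk
      exact hz k hk
    have hS2 := Sf_In hz' A le_rfl
    have h4 : (4:ℝ) ^ A = 2 ^ A * 2 ^ A := by rw [← mul_pow]; norm_num
    rw [hKW, div_eq_div_iff h2A (two_ne_zero)]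
    linear_combination hS2 + h4
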